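/- arXiv:1702.01739 — 2 statements merged into one kernel-verified Lean document; each statement's English description precedes it below -/
import Mathlib

section
/- Define η(P,M,N) = (2P-M)·N^M + (M-P)·N^(M-1) - P(P-1)·N^2 + ((P-1)(2P-M) - P)·N + (M-P)(P-1). Then for all integers M ≥ 7, N ≥ 2, and P with 2P ≥ M and P ≤ M, we have η(P,M,N) > 0. -/
lemma two_pow_ge_aux (k : ℕ) (h : 4 ≤ k) : (k : ℤ) + 3 ≤ 2 ^ k := by
  induction k with
  | zero => omega
  | succ n ih =>
    rcases Nat.lt_or_ge n 4 with h4 | h4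
    · have : n = 3 := by omega
      subst this; norm_num
    · have := ih h4
      have hp : (0:ℤ) ≤ 2 ^ n := by positivity
      push_cast at this ⊢
      rw [pow_succ]
      nlinarith

theorem eta_pos (M P N : ℤ) (hM : 7 ≤ M) (hN : 2 ≤ N) (hMP : M ≤ 2 * P)
    (hPM : P ≤ M) :
    (2 * P - M) * N ^ M.toNat + (M - P) * N ^ (M - 1).toNat
      - P * (P - 1) * N ^ 2 + ((P - 1) * (2 * P - M) - P) * N
      + (M - P) * (P - 1) > 0 := by
  obtain ⟨m, hm⟩ : ∃ m : ℕ, M = (m : ℤ) := ⟨M.toNat, (Int.toNat_of_nonneg (by omega)).symm⟩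
  subst hm
  have hm7 : 7 ≤ m := by exact_mod_cast hM
  obtain ⟨k, hk⟩ : ∃ k : ℕ, m = k + 3 := ⟨m - 3, by omega⟩
  have h1 : ((m : ℤ)).toNat = m := Int.toNat_natCast m
  have h2 : ((m : ℤ) - 1).toNat = k + 2 := by omega
  rw [h1, h2, hk]
  have hk4 : 4 ≤ k := by omega
  have hNk : (k : ℤ) + 3 ≤ N ^ k :=
    le_trans (two_pow_ge_aux k hk4) (pow_le_pow_left₀ (by norm_num) hN k)
  have hmcast : ((m : ℤ)) = (k : ℤ) + 3 := by exact_mod_cast congrArg (Nat.cast : ℕ → ℤ) hk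
  rw [hmcast] at hMP hPM
  push_cast
  set A : ℤ := N ^ k with hA
  have e1 : N ^ (k + 3) = A * N ^ 3 := by rw [hA]; ring
  have e2 : N ^ (k + 2) = A * N ^ 2 := by rw [hA]; ring
  rw [e1, e2]
  have hA0 : (0:ℤ) ≤ A := by positivity
  have hP4 : 4 ≤ P := by omega
  have ha : (0:ℤ) ≤ 2 * P - ((k:ℤ) + 3) := by linarith
  have hb : (0:ℤ) ≤ (k:ℤ) + 3 - P := by linarith
  -- key: (a*N + b) * A * N^2 ≥ P * A * N^2 ≥ P * m * N^2
  have hN0 : (0:ℤ) ≤ N := by linarith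
  nlinarith [mul_nonneg (mul_nonneg ha (by linarith : (0:ℤ) ≤ N - 1)) (mul_nonneg (mul_nonneg hA0 hN0) hN0),
    mul_nonneg (mul_nonneg (by linarith : (0:ℤ) ≤ P) (by linarith : (0:ℤ) ≤ A - ((k:ℤ)+3))) (mul_nonneg hN0 hN0),
    mul_nonneg (mul_nonneg (by linarith : (0:ℤ) ≤ P) (by linarith : (0:ℤ) ≤ (k:ℤ)+3 - P)) (mul_nonneg hN0 hN0),
    mul_nonneg (mul_nonneg (by linarith : (0:ℤ) ≤ P) (by linarith : (0:ℤ) ≤ N - 2)) hN0,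
    mul_nonneg ha (by linarith : (0:ℤ) ≤ N),
    mul_nonneg hb (by linarith : (0:ℤ) ≤ P - 1),
    mul_pos (by linarith : (0:ℤ) < P) (by linarith : (0:ℤ) < N)]
end

section
/- For any real N > 1 and any positive rational x = M/P ≥ 1, the function ̄R(x) = 1/((1-(1/N)^⌊x⌋)/(1-1/N) + (x-⌊x⌋)·(1/N)^⌊x⌋) is strictly decreasing in x. -/
theorem upper_bound_strict_decreasing (N : ℝ) (hN : 1 < N) :
    ∀ x y : ℚ, 1 ≤ x → x < y →
      (1 : ℝ) / ((1 - (1 / N) ^ (⌊y⌋ : ℤ)) / (1 - 1 / N)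
          + ((y : ℝ) - (⌊y⌋ : ℤ)) * (1 / N) ^ (⌊y⌋ : ℤ)) <
      (1 : ℝ) / ((1 - (1 / N) ^ (⌊x⌋ : ℤ)) / (1 - 1 / N)
          + ((x : ℝ) - (⌊x⌋ : ℤ)) * (1 / N) ^ (⌊x⌋ : ℤ)) := by
  intro x y hx hxy
  set q : ℝ := 1 / N with hq
  have hq0 : 0 < q := by positivity
  have hq1 : q < 1 := by
    rw [hq, div_lt_one (by linarith)]; linarith
  have h1q : 0 < 1 - q := by linarith
  set g : ℚ → ℝ := fun z =>
    (1 - q ^ (⌊z⌋ : ℤ)) / (1 - q) + ((z : ℝ) - (⌊z⌋ : ℤ)) * q ^ (⌊z⌋ : ℤ) with hg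
  -- positivity of g x
  have hfx : (1 : ℤ) ≤ ⌊x⌋ := by
    have := Int.le_floor.mpr (by exact_mod_cast hx : ((1:ℤ):ℚ) ≤ x)
    exact this
  have hxpow : q ^ (⌊x⌋ : ℤ) ≤ q := by
    have := zpow_le_zpow_right_of_le_one₀ hq0 (le_of_lt hq1) hfx
    simpa using this
  have hfrx : (0:ℝ) ≤ (x : ℝ) - (⌊x⌋ : ℤ) := by
    have := Int.floor_le x
    have : ((⌊x⌋ : ℚ) : ℝ) ≤ (x : ℝ) := by exact_mod_cast this
    push_cast at this ⊢; linarith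
  have hpowpos : ∀ m : ℤ, (0:ℝ) < q ^ m := fun m => zpow_pos hq0 m
  have hgx0 : 0 < g x := by
    have h1 : 0 < (1 - q ^ (⌊x⌋ : ℤ)) / (1 - q) :=
      div_pos (by linarith) h1q
    have h2 : 0 ≤ ((x : ℝ) - (⌊x⌋ : ℤ)) * q ^ (⌊x⌋ : ℤ) :=
      mul_nonneg hfrx (le_of_lt (hpowpos _))
    simp only [hg]; linarith
  -- monotonicity
  have hmono : g x < g y := by
    rcases lt_or_ge ⌊x⌋ ⌊y⌋ with hf | hf
    · -- g x < (1 - q^(⌊x⌋+1))/(1-q) ≤ (1 - q^⌊y⌋)/(1-q) ≤ g y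
      have hfrx1 : (x : ℝ) - (⌊x⌋ : ℤ) < 1 := by
        have := Int.lt_floor_add_one x
        have : (x : ℝ) < (⌊x⌋ : ℤ) + 1 := by exact_mod_cast this
        linarith
      have step1 : g x < (1 - q ^ (⌊x⌋ + 1 : ℤ)) / (1 - q) := by
        have key : (1 - q ^ (⌊x⌋ + 1 : ℤ)) / (1 - q)
            = (1 - q ^ (⌊x⌋ : ℤ)) / (1 - q) + q ^ (⌊x⌋ : ℤ) := by
          rw [zpow_add_one₀ (ne_of_gt hq0)]
          field_simp
          ring
        rw [key]
        have : ((x : ℝ) - (⌊x⌋ : ℤ)) * q ^ (⌊x⌋ : ℤ) < 1 * q ^ (⌊x⌋ : ℤ) :=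
          mul_lt_mul_of_pos_right hfrx1 (hpowpos _)
        simp only [hg]; linarith [this]
      have step2 : (1 - q ^ (⌊x⌋ + 1 : ℤ)) / (1 - q) ≤ (1 - q ^ (⌊y⌋ : ℤ)) / (1 - q) := by
        have hle : q ^ (⌊y⌋ : ℤ) ≤ q ^ (⌊x⌋ + 1 : ℤ) :=
          zpow_le_zpow_right_of_le_one₀ hq0 (le_of_lt hq1) (by linarith)
        apply div_le_div_of_nonneg_right (by linarith) h1q.le
      have hfry : (0:ℝ) ≤ (y : ℝ) - (⌊y⌋ : ℤ) := by
        have h := Int.floor_le y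
        have h' : ((⌊y⌋ : ℤ) : ℝ) ≤ (y : ℝ) := by exact_mod_cast h
        linarith
      have step3 : (1 - q ^ (⌊y⌋ : ℤ)) / (1 - q) ≤ g y := by
        have h2 : 0 ≤ ((y : ℝ) - (⌊y⌋ : ℤ)) * q ^ (⌊y⌋ : ℤ) :=
          mul_nonneg hfry (le_of_lt (hpowpos _))
        simp only [hg]; linarith
      exact step1.trans_le (step2.trans step3)
    · -- ⌊y⌋ ≤ ⌊x⌋ and x < y implies ⌊x⌋ = ⌊y⌋
      have hfe : ⌊x⌋ = ⌊y⌋ := le_antisymm (Int.floor_le_floor (le_of_lt hxy)) hf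
      have hlt : (x : ℝ) < (y : ℝ) := by exact_mod_cast hxy
      simp only [hg, hfe]
      have : ((x : ℝ) - (⌊y⌋ : ℤ)) * q ^ (⌊y⌋ : ℤ)
          < ((y : ℝ) - (⌊y⌋ : ℤ)) * q ^ (⌊y⌋ : ℤ) :=
        mul_lt_mul_of_pos_right (by linarith) (hpowpos _)
      linarith
  exact one_div_lt_one_div_of_lt hgx0 hmono
end
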